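/- arXiv:2512.14401 — 2 statements merged into one kernel-verified Lean document; each statement's English description precedes it below -/
import Mathlib

section
/- For every real number q with 4 < q < 5 one has ( 2q(5−q)(q−4)/(6−q) ) · Γ((q+1)/2) · π³ / ( (√3)^q Γ(3/2) ) < 2π³ / ( √3 · Γ(3/2)² ), where Γ is the Gamma function. Equivalently, the quantity f(q) = 𝒴(q) Γ((q+1)/2) π³ / ((√3)^q Γ(3/2)) − 2π³/(√3 Γ(3/2)²) with 𝒴(q) = 2q(5−q)(q−4)/(6−q) is strictly negative on the interval (4,5). -/
/-- the numerical inequality from Case 4 (`N = 3`, `4 < q < 5`):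
`(2q(5-q)(q-4)/(6-q)) Γ((q+1)/2) π³ / ((√3)^q Γ(3/2)) < 2π³/(√3 Γ(3/2)²)`. -/
theorem stmt_17 (q : ℝ) (hq1 : 4 < q) (hq2 : q < 5) :
    (2 * q * (5 - q) * (q - 4) / (6 - q)) * Real.Gamma ((q + 1) / 2) * Real.pi ^ 3 /
        (Real.sqrt 3 ^ q * Real.Gamma (3 / 2)) <
      2 * Real.pi ^ 3 / (Real.sqrt 3 * Real.Gamma (3 / 2) ^ 2) := by
  have hπ := Real.pi_gt_three
  have hπ' := Real.pi_lt_d2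
  -- Γ(3/2) = √π / 2
  have hΓ32 : Real.Gamma (3 / 2) = Real.sqrt Real.pi / 2 := by
    have h : (3 / 2 : ℝ) = 1 / 2 + 1 := by norm_num
    rw [h, Real.Gamma_add_one (by norm_num), Real.Gamma_one_half_eq]
    ring
  -- Γ on [1,2] is at most 1
  have hΓle1 : ∀ x : ℝ, 1 ≤ x → x ≤ 2 → Real.Gamma x ≤ 1 := by
    intro x hx1 hx2
    have h := Real.convexOn_Gamma.le_on_segment' (x := 1) (y := 2)
      (by norm_num : (1:ℝ) ∈ Set.Ioi (0:ℝ)) (by norm_num : (2:ℝ) ∈ Set.Ioi (0:ℝ))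
      (a := 2 - x) (b := x - 1) (by linarith) (by linarith) (by ring)
    have hx : (2 - x) • (1:ℝ) + (x - 1) • (2:ℝ) = x := by
      simp [smul_eq_mul]; ring
    rw [hx, Real.Gamma_one, Real.Gamma_two] at h
    simpa using h
  -- Γ((q+1)/2) ≤ (q-1)/2 < 2
  set G := Real.Gamma ((q + 1) / 2) with hG
  have hGpos : 0 < G := Real.Gamma_pos_of_pos (by linarith)
  have hGle : G ≤ (q - 1) / 2 := by
    have h : (q + 1) / 2 = (q - 1) / 2 + 1 := by ring
    rw [hG, h, Real.Gamma_add_one (ne_of_gt (by linarith : (0:ℝ) < (q-1)/2))]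
    nlinarith [hΓle1 ((q - 1) / 2) (by linarith) (by linarith),
      Real.Gamma_pos_of_pos (show (0:ℝ) < (q - 1) / 2 by linarith)]
  -- √3 bounds
  have h3pos : (0:ℝ) < Real.sqrt 3 := Real.sqrt_pos.mpr (by norm_num)
  have h3lt : Real.sqrt 3 < 1.8 := by
    rw [show (1.8:ℝ) = Real.sqrt (1.8 ^ 2) by rw [Real.sqrt_sq (by norm_num)]]
    exact Real.sqrt_lt_sqrt (by norm_num) (by norm_num)
  have h3gt : (1:ℝ) < Real.sqrt 3 := by
    rw [show (1:ℝ) = Real.sqrt 1 by simp]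
    exact Real.sqrt_lt_sqrt (by norm_num) (by norm_num)
  -- (√3)^q ≥ 9
  have hS : (9:ℝ) ≤ Real.sqrt 3 ^ q := by
    have h4 : Real.sqrt 3 ^ (4:ℝ) ≤ Real.sqrt 3 ^ q :=
      Real.rpow_le_rpow_left_iff h3gt |>.mpr (le_of_lt hq1)
    calc (9:ℝ) = Real.sqrt 3 ^ (4:ℕ) := by
          rw [show ((4:ℕ)) = 2 * 2 by norm_num, pow_mul, Real.sq_sqrt (by norm_num)]; norm_num
      _ = Real.sqrt 3 ^ (4:ℝ) := by rw [← Real.rpow_natCast]; norm_num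
      _ ≤ _ := h4
  have hSpos : (0:ℝ) < Real.sqrt 3 ^ q := Real.rpow_pos_of_pos h3pos q
  -- √π bounds
  have hsπpos : (0:ℝ) < Real.sqrt Real.pi := Real.sqrt_pos.mpr (by linarith)
  have hsπgt : (1.7:ℝ) < Real.sqrt Real.pi := by
    rw [show (1.7:ℝ) = Real.sqrt (1.7 ^ 2) by rw [Real.sqrt_sq (by norm_num)]]
    exact Real.sqrt_lt_sqrt (by norm_num) (by nlinarith)
  have hsπlt : Real.sqrt Real.pi < 2 := by
    rw [show (2:ℝ) = Real.sqrt (2 ^ 2) by rw [Real.sqrt_sq (by norm_num)]]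
    exact Real.sqrt_lt_sqrt (by positivity) (by nlinarith)
  rw [hΓ32]
  rw [div_lt_div_iff₀ (by positivity) (by positivity)]
  have hπ3pos : (0:ℝ) < Real.pi ^ 3 := by positivity
  -- key numeric bound: Y * G ≤ 5 where Y = 2q(5-q)(q-4)/(6-q)
  have hY : 2 * q * (5 - q) * (q - 4) / (6 - q) ≤ 5 / 2 := by
    rw [div_le_iff₀ (by linarith)]
    nlinarith [sq_nonneg (q - 4.5), sq_nonneg (q - 9)]
  have hYpos : 0 ≤ 2 * q * (5 - q) * (q - 4) / (6 - q) := by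
    apply div_nonneg
    · have := mul_nonneg (mul_nonneg (by linarith : (0:ℝ) ≤ 2 * q) (by linarith : (0:ℝ) ≤ 5 - q)) (by linarith : (0:ℝ) ≤ q - 4)
      linarith
    · linarith
  have hYG : 2 * q * (5 - q) * (q - 4) / (6 - q) * G ≤ 5 := by
    calc 2 * q * (5 - q) * (q - 4) / (6 - q) * G ≤ (5/2) * 2 :=
          mul_le_mul hY (by linarith) (le_of_lt hGpos) (by norm_num)
      _ = 5 := by norm_num
  -- now the goal is polynomial
  have hsq : Real.sqrt Real.pi ^ 2 = Real.pi := Real.sq_sqrt (by linarith)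
  have hpos4 : (0:ℝ) < Real.pi ^ 3 * (Real.sqrt 3 * (Real.pi / 4)) := by positivity
  have h2 : 2 * q * (5 - q) * (q - 4) / (6 - q) * G *
      (Real.pi ^ 3 * (Real.sqrt 3 * (Real.pi / 4))) ≤
      5 * (Real.pi ^ 3 * (Real.sqrt 3 * (Real.pi / 4))) :=
    mul_le_mul_of_nonneg_right hYG (le_of_lt hpos4)
  have h1 : Real.sqrt 3 * Real.pi ≤ 1.8 * 3.15 :=
    mul_le_mul (le_of_lt h3lt) (le_of_lt hπ') (by linarith) (by norm_num)
  have h3 : Real.pi ^ 3 * (Real.sqrt 3 * (Real.pi / 4)) ≤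
      Real.pi ^ 3 * (1.8 * 3.15 / 4) := by
    apply mul_le_mul_of_nonneg_left _ (le_of_lt hπ3pos)
    linarith
  have h4 : Real.pi ^ 3 * (9 * 1.7) ≤ Real.pi ^ 3 * (Real.sqrt 3 ^ q * Real.sqrt Real.pi) := by
    apply mul_le_mul_of_nonneg_left _ (le_of_lt hπ3pos)
    exact mul_le_mul hS (le_of_lt hsπgt) (by norm_num) (by linarith)
  nlinarith [h2, h3, h4, hπ3pos, hsq, mul_pos hπ3pos (mul_pos h3pos (show (0:ℝ) < Real.pi/4 by linarith))]
end

section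
/- Let N ≥ 3 be an integer and let γ = (γ_1,…,γ_N) ∈ ℝ^N with γ ≠ 0, and set v(x) = ∑_{k=1}^N γ_k x_k / (N(N−2)+|x|²)^{N/2} for x ∈ ℝ^N. Let (y_n) be a sequence of continuously differentiable functions on ℝ^N such that y_n → v and ∇y_n → ∇v uniformly on every compact subset of ℝ^N. Then for every R > 0 there exists n₀ such that for all n ≥ n₀ the sets { x ∈ ℝ^N : |x| < R, y_n(x) > 0 } and { x ∈ ℝ^N : |x| < R, y_n(x) < 0 } are both nonempty and connected. -/
/-!
Write `v = ℓ · φ` with `ℓ = ⟪γ, ·⟫` and `φ > 0`. On the closed ball `φ ≥ m > 0` and `‖Dφ‖ ≤ L`,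
so `v ≥ σ m` on the half-space `ℓ ≥ σ`, `v ≤ -σ m` on `ℓ ≤ -σ`, and in the slab `|ℓ| < σ` the
derivative of `v` towards a fixed point `q` with `ℓ q > σ` is bounded below by a positive constant,
because the term `ℓ · Dφ` is small there. These three properties survive a small `C¹` perturbation
`u` of `v`, and they make `{u > 0}` star-shaped about `q`: moving from a point of `{u > 0}` towards
`q`, one stays in the slab, where `u` increases, until entering the half-space `ℓ ≥ σ`, where
`u > 0`. The negative set is the positive set of `-u`.
-/

open Filter Set Metric

section Normed

variable {E : Type*} [NormedAddCommGroup E] [NormedSpace ℝ E]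

theorem starConvex_setOf_pos {Ω : Set E} (hΩ : Convex ℝ Ω) {u : E → ℝ} (hu : Differentiable ℝ u)
    (ℓ : E →ₗ[ℝ] ℝ) {σ : ℝ} {q : E} (hqΩ : q ∈ Ω) (hσq : σ ≤ ℓ q)
    (hpos : ∀ x ∈ Ω, σ ≤ ℓ x → 0 < u x)
    (hneg : ∀ x ∈ Ω, 0 < u x → -σ < ℓ x)
    (hmono : ∀ x ∈ Ω, ∀ z ∈ Ω, |ℓ x| < σ → |ℓ z| < σ → 0 ≤ fderiv ℝ u z (q - x)) :
    StarConvex ℝ q {x | x ∈ Ω ∧ 0 < u x} := by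
  rw [starConvex_iff_segment_subset]
  rintro x ⟨hxΩ, hux⟩ m hm
  have hmΩ : m ∈ Ω := hΩ.segment_subset hqΩ hxΩ hm
  refine ⟨hmΩ, ?_⟩
  by_cases hσm : σ ≤ ℓ m
  · exact hpos m hmΩ hσm
  have hxσ : ℓ x < σ := by
    by_contra! hσx
    exact hσm (((convex_Ici σ).linear_preimage ℓ).segment_subset hσq hσx hm)
  have hxσ' : -σ < ℓ x := hneg x hxΩ hux
  have hmσ' : -σ < ℓ m :=
    ((convex_Ioi (-σ)).linear_preimage ℓ).segment_subset (show -σ < ℓ q by linarith) hxσ' hm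
  -- on the segment from `x` to `m` we stay in the slab `|ℓ| < σ`, where `u` increases towards `q`
  have hslab : Convex ℝ (Ω ∩ ℓ ⁻¹' Ioo (-σ) σ) := hΩ.inter ((convex_Ioo _ _).linear_preimage ℓ)
  obtain ⟨z, hz, hmvt⟩ := domain_mvt (fun z _ => (hu z).hasFDerivAt.hasFDerivWithinAt)
    (convex_segment x m) (left_mem_segment ℝ x m) (right_mem_segment ℝ x m)
  obtain ⟨hzΩ, hzσ', hzσ⟩ := hslab.segment_subset ⟨hxΩ, hxσ', hxσ⟩ ⟨hmΩ, hmσ', not_le.1 hσm⟩ hz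
  obtain ⟨a, b, ha, -, hab, rfl⟩ := hm
  have hdir : a • q + b • x - x = a • (q - x) := by
    rw [← sub_eq_of_eq_add' hab.symm]
    module
  rw [hdir, map_smul, smul_eq_mul] at hmvt
  have := mul_nonneg ha (hmono x hxΩ z hzΩ (abs_lt.2 ⟨hxσ', hxσ⟩) (abs_lt.2 ⟨hzσ', hzσ⟩))
  linarith

theorem fderiv_clm_mul_apply {ℓ : E →L[ℝ] ℝ} {φ : E → ℝ} {z : E} (hφ : DifferentiableAt ℝ φ z)
    (w : E) : fderiv ℝ (fun x => ℓ x * φ x) z w = ℓ w * φ z + ℓ z * fderiv ℝ φ z w := by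
  rw [fderiv_fun_mul ℓ.differentiableAt hφ, ℓ.fderiv]
  simp only [add_apply, smul_apply, smul_eq_mul]
  ring

theorem sub_le_fderiv_clm_mul_apply {ℓ : E →L[ℝ] ℝ} {φ : E → ℝ} {z w : E}
    (hφ : DifferentiableAt ℝ φ z) {m L σ : ℝ} (hm : m ≤ φ z) (hL : ‖fderiv ℝ φ z‖ ≤ L)
    (hz : |ℓ z| ≤ σ) (hw : 0 ≤ ℓ w) :
    ℓ w * m - σ * (L * ‖w‖) ≤ fderiv ℝ (fun x => ℓ x * φ x) z w := by
  rw [fderiv_clm_mul_apply hφ]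
  have hmain : ℓ w * m ≤ ℓ w * φ z := mul_le_mul_of_nonneg_left hm hw
  have herr : |ℓ z * fderiv ℝ φ z w| ≤ σ * (L * ‖w‖) := by
    rw [abs_mul, ← Real.norm_eq_abs (fderiv ℝ φ z w)]
    exact mul_le_mul hz ((fderiv ℝ φ z).le_of_opNorm_le hL w) (norm_nonneg _)
      ((abs_nonneg _).trans hz)
  linarith [neg_abs_le (ℓ z * fderiv ℝ φ z w)]

theorem ContinuousLinearMap.exists_norm_lt_and_apply_pos {ℓ : E →L[ℝ] ℝ} (hℓ : ℓ ≠ 0) {R : ℝ}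
    (hR : 0 < R) : ∃ q : E, ‖q‖ < R ∧ 0 < ℓ q := by
  obtain ⟨w, hw⟩ := DFunLike.ne_iff.1 hℓ
  set w₀ := ℓ w • w
  have hℓw₀ : 0 < ℓ w₀ := by
    simpa [w₀, ← sq] using sq_pos_of_ne_zero hw
  have hw₀ : 0 < ‖w₀‖ := norm_pos_iff.2 fun h => by simp [h] at hℓw₀
  refine ⟨(R / (2 * ‖w₀‖)) • w₀, ?_, ?_⟩
  · rw [norm_smul, Real.norm_of_nonneg (by positivity)]
    field_simp
    linarith
  · rw [map_smul, smul_eq_mul]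
    positivity

theorem isConnected_setOf_pos_of_near {ℓ : E →L[ℝ] ℝ} {φ : E → ℝ} (hφ : Differentiable ℝ φ)
    {R m L σ ε : ℝ} (hm₀ : 0 ≤ m) (hσ : 0 ≤ σ) (hm : ∀ x ∈ closedBall (0 : E) R, m ≤ φ x)
    (hL : ∀ x ∈ closedBall (0 : E) R, ‖fderiv ℝ φ x‖ ≤ L)
    {q : E} (hqR : ‖q‖ < R) (hσq : σ ≤ ℓ q) (hgap : 2 * R * (σ * L + ε) ≤ (ℓ q - σ) * m)
    {u : E → ℝ} (hu : Differentiable ℝ u)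
    (hclose : ∀ x ∈ closedBall (0 : E) R, |u x - ℓ x * φ x| < σ * m)
    (hclose' : ∀ x ∈ closedBall (0 : E) R,
      ‖fderiv ℝ u x - fderiv ℝ (fun x => ℓ x * φ x) x‖ ≤ ε) :
    IsConnected {x | ‖x‖ < R ∧ 0 < u x} := by
  have h0 : (0 : E) ∈ closedBall 0 R := mem_closedBall_self ((norm_nonneg q).trans hqR.le)
  have hL₀ : 0 ≤ L := (norm_nonneg _).trans (hL 0 h0)
  have hε₀ : 0 ≤ ε := (norm_nonneg _).trans (hclose' 0 h0)
  have hpos : ∀ x ∈ ball (0 : E) R, σ ≤ ℓ x → 0 < u x := by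
    intro x hx hσx
    have hxK := ball_subset_closedBall hx
    have : σ * m ≤ ℓ x * φ x := mul_le_mul hσx (hm x hxK) hm₀ (hσ.trans hσx)
    linarith [(abs_lt.1 (hclose x hxK)).1]
  have hneg : ∀ x ∈ ball (0 : E) R, 0 < u x → -σ < ℓ x := by
    intro x hx hux
    by_contra! hxσ
    have hxK := ball_subset_closedBall hx
    have : ℓ x * φ x ≤ ℓ x * m := mul_le_mul_of_nonpos_left (hm x hxK) (by linarith)
    nlinarith [(abs_lt.1 (hclose x hxK)).2]
  have hmono : ∀ x ∈ ball (0 : E) R, ∀ z ∈ ball (0 : E) R, |ℓ x| < σ → |ℓ z| < σ →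
      0 ≤ fderiv ℝ u z (q - x) := by
    intro x hx z hz hxσ hzσ
    have hzK := ball_subset_closedBall hz
    have hw : ‖q - x‖ ≤ 2 * R :=
      (norm_sub_le _ _).trans (by linarith [mem_ball_zero_iff.1 hx])
    have hℓw : ℓ q - σ ≤ ℓ (q - x) := by
      rw [map_sub]
      linarith [(abs_lt.1 hxσ).2]
    have hv := sub_le_fderiv_clm_mul_apply (hφ z) (hm z hzK) (hL z hzK) hzσ.le (by linarith)
    have herr := ((fderiv ℝ u z - fderiv ℝ (fun x => ℓ x * φ x) z).le_of_opNorm_le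
      (hclose' z hzK) (q - x))
    rw [sub_apply, Real.norm_eq_abs] at herr
    have h1 : (ℓ q - σ) * m ≤ ℓ (q - x) * m := mul_le_mul_of_nonneg_right hℓw hm₀
    have h2 : σ * (L * ‖q - x‖) ≤ σ * (L * (2 * R)) := by gcongr
    have h3 : ε * ‖q - x‖ ≤ ε * (2 * R) := by gcongr
    linarith [neg_abs_le (fderiv ℝ u z (q - x) - fderiv ℝ (fun x => ℓ x * φ x) z (q - x))]
  have hS := starConvex_setOf_pos (convex_ball 0 R) hu ℓ (mem_ball_zero_iff.2 hqR) hσq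
    hpos hneg hmono
  simpa only [mem_ball_zero_iff] using
    (hS.isPathConnected ⟨mem_ball_zero_iff.2 hqR, hpos q (mem_ball_zero_iff.2 hqR) hσq⟩).isConnected

theorem eventually_isConnected_setOf_pos [ProperSpace E] {ℓ : E →L[ℝ] ℝ} (hℓ : ℓ ≠ 0)
    {φ : E → ℝ} (hφ : ContDiff ℝ 1 φ) (hφ_pos : ∀ x, 0 < φ x) {ι : Type*} {l : Filter ι}
    {y : ι → E → ℝ} (hy : ∀ᶠ n in l, Differentiable ℝ (y n)) {R : ℝ} (hR : 0 < R)
    (hconv : TendstoUniformlyOn y (fun x => ℓ x * φ x) l (closedBall 0 R))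
    (hconv' : TendstoUniformlyOn (fun n => fderiv ℝ (y n)) (fderiv ℝ fun x => ℓ x * φ x) l
      (closedBall 0 R)) :
    ∀ᶠ n in l, IsConnected {x | ‖x‖ < R ∧ 0 < y n x} := by
  have hK := isCompact_closedBall (0 : E) R
  obtain ⟨x₀, -, hmin⟩ :=
    hK.exists_isMinOn (nonempty_closedBall.2 hR.le) hφ.continuous.continuousOn
  obtain ⟨L, hL⟩ :=
    hK.exists_bound_of_continuousOn (hφ.continuous_fderiv one_ne_zero).continuousOn
  obtain ⟨q, hqR, hq⟩ := ℓ.exists_norm_lt_and_apply_pos hℓ hR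
  set m := φ x₀
  have hm : 0 < m := hφ_pos x₀
  have hL₀ : 0 ≤ L := (norm_nonneg _).trans (hL 0 (mem_closedBall_self hR.le))
  obtain ⟨σ, hσ, hσq⟩ := exists_pos_mul_lt (mul_pos hq hm) (m + 2 * R * L)
  have hσℓ : σ < ℓ q := by
    nlinarith [mul_nonneg (mul_nonneg (by positivity : (0 : ℝ) ≤ 2 * R) hL₀) hσ.le]
  set ε := ((ℓ q - σ) * m - 2 * R * σ * L) / (2 * R)
  have hε : 0 < ε := div_pos (by nlinarith) (by positivity)
  filter_upwards [hy, Metric.tendstoUniformlyOn_iff.1 hconv _ (mul_pos hσ hm),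
    Metric.tendstoUniformlyOn_iff.1 hconv' ε hε] with n hdiff hclose hclose'
  refine isConnected_setOf_pos_of_near (ℓ := ℓ) (ε := ε) hφ.differentiable_one hm.le hσ.le
    hmin hL hqR hσℓ.le (le_of_eq ?_) hdiff (fun x hx => ?_) (fun x hx => ?_)
  · simp only [ε]
    field_simp
    ring
  · rw [← Real.dist_eq, dist_comm]
    exact hclose x hx
  · rw [← dist_eq_norm, dist_comm]
    exact (hclose' x hx).le

theorem eventually_isConnected_setOf_neg [ProperSpace E] {ℓ : E →L[ℝ] ℝ} (hℓ : ℓ ≠ 0)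
    {φ : E → ℝ} (hφ : ContDiff ℝ 1 φ) (hφ_pos : ∀ x, 0 < φ x) {ι : Type*} {l : Filter ι}
    {y : ι → E → ℝ} (hy : ∀ᶠ n in l, Differentiable ℝ (y n)) {R : ℝ} (hR : 0 < R)
    (hconv : TendstoUniformlyOn y (fun x => ℓ x * φ x) l (closedBall 0 R))
    (hconv' : TendstoUniformlyOn (fun n => fderiv ℝ (y n)) (fderiv ℝ fun x => ℓ x * φ x) l
      (closedBall 0 R)) :
    ∀ᶠ n in l, IsConnected {x | ‖x‖ < R ∧ y n x < 0} := by
  have hneg : (fun x => (-ℓ) x * φ x) = fun x => -(ℓ x * φ x) := by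
    ext x
    simp only [neg_apply, neg_mul]
  have := eventually_isConnected_setOf_pos (neg_ne_zero.2 hℓ) hφ hφ_pos
    (y := fun n x => -y n x) (hy.mono fun n h => h.neg) hR
    (by rw [hneg]; exact hconv.fun_neg)
    (by simpa only [hneg, ← fderiv_fun_neg] using hconv'.fun_neg)
  simpa only [neg_pos] using this

end Normed

/-- if `y_n → v` in `C¹_loc(ℝ^N)`, where
`v(x) = ∑ γ_k x_k/(N(N-2)+|x|²)^{N/2}` with `γ ≠ 0`, then for every `R > 0` and all
large `n` the sets `{|x| < R, y_n > 0}` and `{|x| < R, y_n < 0}` are nonempty and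
connected. -/
theorem stmt_18 (N : ℕ) (hN : 3 ≤ N)
    (γ : EuclideanSpace ℝ (Fin N)) (hγ : γ ≠ 0)
    (v : EuclideanSpace ℝ (Fin N) → ℝ)
    (hv : ∀ x, v x = (∑ k, γ k * x k) /
      ((N : ℝ) * ((N : ℝ) - 2) + ‖x‖ ^ 2) ^ ((N : ℝ) / 2))
    (y : ℕ → EuclideanSpace ℝ (Fin N) → ℝ)
    (hy : ∀ n, ContDiff ℝ 1 (y n))
    (hconv : ∀ K : Set (EuclideanSpace ℝ (Fin N)), IsCompact K →
      TendstoUniformlyOn (fun n => y n) v atTop K)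
    (hconv' : ∀ K : Set (EuclideanSpace ℝ (Fin N)), IsCompact K →
      TendstoUniformlyOn (fun n x => gradient (y n) x) (fun x => gradient v x) atTop K) :
    ∀ R > (0 : ℝ), ∃ n₀ : ℕ, ∀ n ≥ n₀,
      IsConnected {x : EuclideanSpace ℝ (Fin N) | ‖x‖ < R ∧ 0 < y n x} ∧
      IsConnected {x : EuclideanSpace ℝ (Fin N) | ‖x‖ < R ∧ y n x < 0} := by
  intro R hR
  have hbase : ∀ x : EuclideanSpace ℝ (Fin N), 0 < (N : ℝ) * ((N : ℝ) - 2) + ‖x‖ ^ 2 := by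
    have : (3 : ℝ) ≤ N := by exact_mod_cast hN
    intro x
    nlinarith [sq_nonneg ‖x‖]
  set φ : EuclideanSpace ℝ (Fin N) → ℝ :=
    fun x => (((N : ℝ) * ((N : ℝ) - 2) + ‖x‖ ^ 2) ^ ((N : ℝ) / 2))⁻¹
  have hφ_pos : ∀ x, 0 < φ x := fun x => inv_pos.2 (Real.rpow_pos_of_pos (hbase x) _)
  have hφ : ContDiff ℝ 1 φ :=
    ((contDiff_const.add (contDiff_norm_sq ℝ)).rpow_const_of_ne fun x => (hbase x).ne').inv
      fun x => (inv_pos.1 (hφ_pos x)).ne'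
  obtain rfl : v = fun x => innerSL ℝ γ x * φ x := by
    ext x
    rw [hv, div_eq_mul_inv, innerSL_apply_apply, PiLp.inner_apply]
    simp [φ, mul_comm]
  have hℓ : innerSL ℝ γ ≠ 0 := by
    rwa [← norm_ne_zero_iff, innerSL_apply_norm, norm_ne_zero_iff]
  have hdiff := Eventually.of_forall (f := atTop) fun n => (hy n).differentiable one_ne_zero
  have hconvK := hconv _ (isCompact_closedBall 0 R)
  have hconvK' : TendstoUniformlyOn (fun n => fderiv ℝ (y n))
      (fderiv ℝ fun x => innerSL ℝ γ x * φ x) atTop (closedBall 0 R) := by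
    simpa using (InnerProductSpace.toDual ℝ _).isometry.uniformContinuous.comp_tendstoUniformlyOn
      (hconv' _ (isCompact_closedBall 0 R))
  exact eventually_atTop.1
    ((eventually_isConnected_setOf_pos hℓ hφ hφ_pos hdiff hR hconvK hconvK').and
      (eventually_isConnected_setOf_neg hℓ hφ hφ_pos hdiff hR hconvK hconvK'))
end
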